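/- Let L ≥ 1, let Σ be a nonempty alphabet, and let μ be any probability distribution with finite support on functions from strings over Σ to Fin (2^L) such that every function in the support of μ is an iterated hash function. Then μ is not universal over the strings of length at most 2^L + 2: there exist two distinct strings s, s' of length at most 2^L + 2 with P(h(s) = h(s')) > 1/2^L. -/

import Mathlib

/-!
Fix a letter `a` and write `n = 2^L`. For an iterated hash with compression function `F`,
`h (a^k) = g^[k] H₀` with `g = F · a`; as `g` acts on `n` values, this orbit is periodic with some
period `d` from some index `i` with `i + d ≤ n`. Look at the `3n - 1` pairs `(a^(n+t-e), a^(n+t))`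
with `t ∈ {0, 1, 2}`, `1 ≤ e ≤ n`, `(t, e) ≠ (1, 1)`: every `h` collides on at least three of them
(take `e = d`, except `e = 2` for `t = 1` when `d = 1`). Averaging over `μ`, the collision
probabilities of these pairs add up to at least `3 > (3n - 1)/n`, so one of them exceeds `1/n`.
-/

open scoped ENNReal

open Finset Function

theorem List.foldl_replicate {α β : Type*} (f : β → α → β) (a : α) (k : ℕ) (b : β) :
    (List.replicate k a).foldl f b = (f · a)^[k] b := by
  induction k generalizing b with
  | zero => rfl
  | succ k ih => rw [List.replicate_succ, List.foldl_cons, ih, iterate_succ_apply]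

namespace Function

variable {α : Type*}

theorem exists_isPeriodicPt_iterate_of_card_le [Fintype α] {n : ℕ} (hn : Fintype.card α ≤ n)
    (f : α → α) (x : α) : ∃ i d, 0 < d ∧ i + d ≤ n ∧ IsPeriodicPt f d (f^[i] x) := by
  have of_lt : ∀ i j, i < j → j ≤ n → f^[i] x = f^[j] x →
      ∃ i d, 0 < d ∧ i + d ≤ n ∧ IsPeriodicPt f d (f^[i] x) := fun i j hij hjn heq =>
    ⟨i, j - i, by omega, by omega, by
      rw [IsPeriodicPt, IsFixedPt, ← iterate_add_apply, Nat.sub_add_cancel hij.le, heq]⟩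
  obtain ⟨i, j, hne, heq⟩ := Fintype.exists_ne_map_eq_of_card_lt (fun k : Fin (n + 1) => f^[k] x)
    (by simpa using Nat.lt_succ_of_le hn)
  rcases lt_or_gt_of_ne (Fin.val_ne_of_ne hne) with hij | hji
  · exact of_lt i j hij (by omega) heq
  · exact of_lt j i hji (by omega) heq.symm

theorem IsPeriodicPt.iterate_add_of_dvd {f : α → α} {x : α} {d i k m : ℕ} (h : IsPeriodicPt f d (f^[i] x))
    (hik : i ≤ k) (hm : d ∣ m) : f^[m + k] x = f^[k] x := by
  obtain ⟨c, rfl⟩ := hm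
  have := ((h.mul_const c).apply_iterate (k - i)).eq
  simpa only [← iterate_add_apply, add_assoc, Nat.sub_add_cancel hik] using this

end Function

namespace PMF

theorem exists_lt_tsum_ite_of_le_card_filter {α ι : Type*} (μ : PMF α) (T : Finset ι)
    (P : ι → α → Prop) [∀ i, DecidablePred (P i)] {c : ℕ} {ε : ℝ≥0∞}
    (hc : ∀ x ∈ μ.support, c ≤ #{i ∈ T | P i x}) (hε : #T * ε < c) :
    ∃ i ∈ T, ε < ∑' x, if P i x then μ x else 0 := by
  by_contra! hle
  have expected_count : (c : ℝ≥0∞) ≤ ∑ i ∈ T, ∑' x, if P i x then μ x else 0 := by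
    calc (c : ℝ≥0∞) = ∑' x, c * μ x := by rw [ENNReal.tsum_mul_left, μ.tsum_coe, mul_one]
      _ ≤ ∑' x, ∑ i ∈ T, if P i x then μ x else 0 := by
        refine ENNReal.tsum_le_tsum fun x => ?_
        rw [← Finset.sum_filter, Finset.sum_const, nsmul_eq_mul]
        by_cases hx : μ x = 0
        · simp [hx]
        · exact mul_le_mul_left (by exact_mod_cast hc x hx) _
      _ = _ := Summable.tsum_finsetSum fun _ _ => ENNReal.summable
  have hsum_le := (Finset.sum_le_sum hle).trans_eq (by rw [Finset.sum_const, nsmul_eq_mul])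
  exact (expected_count.trans hsum_le).not_gt hε

end PMF

/-- `(t, e)` stands for the pair of lengths `(n + t - e, n + t)`. -/
def shiftPairs (n : ℕ) : Finset (ℕ × ℕ) :=
  (range 3 ×ˢ Icc 1 n).erase (1, 1)

theorem card_shiftPairs_mul_one_div_lt {n : ℕ} (hn : 1 ≤ n) :
    (#(shiftPairs n) : ℝ≥0∞) * (1 / n) < 3 := by
  have hcard : #(shiftPairs n) = 3 * n - 1 := by
    rw [shiftPairs, card_erase_of_mem (by simp only [mem_product, mem_range, mem_Icc]; omega), card_product, card_range, Nat.card_Icc,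
      Nat.add_sub_cancel]
  have hn0 : (n : ℝ≥0∞) ≠ 0 := by exact_mod_cast (by omega : n ≠ 0)
  rw [← div_eq_mul_one_div, ENNReal.div_lt_iff (Or.inl hn0) (Or.inl (ENNReal.natCast_ne_top n)),
    hcard]
  exact_mod_cast (by omega : 3 * n - 1 < 3 * n)

theorem three_le_card_shiftPairs_iterate_eq {V : Type*} [Fintype V] [DecidableEq V] {n : ℕ}
    (hV : Fintype.card V ≤ n) (hn : 2 ≤ n) (f : V → V) (x : V) :
    3 ≤ #{p ∈ shiftPairs n | f^[n + p.1 - p.2] x = f^[n + p.1] x} := by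
  obtain ⟨i, d, hd, hid, hper⟩ := exists_isPeriodicPt_iterate_of_card_le hV f x
  let shift (t : ℕ) : ℕ := if t = 1 ∧ d = 1 then 2 else d
  have hshift (t : ℕ) : 1 ≤ shift t ∧ shift t ≤ n ∧ (t = 1 → shift t ≠ 1) ∧ d ∣ shift t ∧
      i + shift t ≤ n + t := by
    by_cases h : t = 1 ∧ d = 1
    · obtain ⟨rfl, rfl⟩ := h
      simp only [shift, and_self, if_true]
      exact ⟨by omega, hn, by omega, one_dvd 2, by omega⟩
    · simp only [shift, if_neg h]
      exact ⟨hd, by omega, fun ht hd1 => h ⟨ht, hd1⟩, dvd_rfl, by omega⟩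
  have hsub : (range 3).image (fun t => (t, shift t)) ⊆
      {p ∈ shiftPairs n | f^[n + p.1 - p.2] x = f^[n + p.1] x} := by
    intro p hp
    obtain ⟨t, ht, rfl⟩ := mem_image.1 hp
    obtain ⟨h1, hn', h11, hdvd, hi⟩ := hshift t
    refine mem_filter.2 ⟨?_, ?_⟩
    · simp only [shiftPairs, mem_erase, mem_product, mem_Icc, ne_eq, Prod.mk.injEq]
      exact ⟨fun h => h11 h.1 h.2, ht, h1, hn'⟩
    · have hcollide := hper.iterate_add_of_dvd (k := n + t - shift t) (by omega) hdvd
      rw [Nat.add_sub_cancel' (by omega)] at hcollide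
      exact hcollide.symm
  calc 3 = #((range 3).image (fun t => (t, shift t))) := by
        rw [card_image_of_injective _ fun a b h => (Prod.mk.inj h).1, card_range]
    _ ≤ _ := card_le_card hsub

theorem iterated_not_universal_beyond_general
    {A : Type*} [Nonempty A] (L : ℕ) (hL : 1 ≤ L)
    (μ : PMF (List A → Fin (2 ^ L)))
    (hiter : ∀ h ∈ μ.support, ∃ (F : Fin (2 ^ L) → A → Fin (2 ^ L)) (H0 : Fin (2 ^ L)),
      ∀ s : List A, h s = List.foldl F H0 s) :
    ∃ s s' : List A, s ≠ s' ∧ s.length ≤ 2 ^ L + 2 ∧ s'.length ≤ 2 ^ L + 2 ∧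
      1 / 2 ^ L < ∑' h : List A → Fin (2 ^ L), if h s = h s' then μ h else 0 := by
  obtain ⟨a⟩ := ‹Nonempty A›
  have hn : 2 ≤ 2 ^ L := Nat.le_self_pow (by omega) 2
  obtain ⟨⟨t, d⟩, hp, hlt⟩ := μ.exists_lt_tsum_ite_of_le_card_filter (shiftPairs (2 ^ L))
    (fun p h => h (.replicate (2 ^ L + p.1 - p.2) a) = h (.replicate (2 ^ L + p.1) a))
    (c := 3) (ε := 1 / 2 ^ L)
    (fun h hh => by
      obtain ⟨F, H0, hF⟩ := hiter h hh
      simpa only [hF, List.foldl_replicate] using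
        three_le_card_shiftPairs_iterate_eq (by simp) hn (F · a) H0)
    (by exact_mod_cast card_shiftPairs_mul_one_div_lt (by omega : 1 ≤ 2 ^ L))
  simp only [shiftPairs, mem_erase, mem_product, mem_range, mem_Icc] at hp
  dsimp only at hlt
  refine ⟨_, _, fun h => ?_, ?_, ?_, hlt⟩
  · have := congrArg List.length h
    simp only [List.length_replicate] at this
    omega
  all_goals simp only [List.length_replicate]; omega

/-- a finitely supported distribution on iterated hash functions into
`Fin (2^L)` (`L ≥ 1`) is never universal over the strings of length at most `2^L + 2`:
some pair of distinct such strings collides with probability exceeding `1/2^L`. -/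
theorem iterated_not_universal_beyond
    {A : Type*} [Nonempty A] (L : ℕ) (hL : 1 ≤ L)
    (μ : PMF (List A → Fin (2 ^ L))) (hfin : μ.support.Finite)
    (hiter : ∀ h ∈ μ.support, ∃ (F : Fin (2 ^ L) → A → Fin (2 ^ L)) (H0 : Fin (2 ^ L)),
      ∀ s : List A, h s = List.foldl F H0 s) :
    ∃ s s' : List A, s ≠ s' ∧ s.length ≤ 2 ^ L + 2 ∧ s'.length ≤ 2 ^ L + 2 ∧
      1 / 2 ^ L < ∑' h : List A → Fin (2 ^ L), if h s = h s' then μ h else 0 :=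
  iterated_not_universal_beyond_general L hL μ hiter
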